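/- On the seven-dimensional Lie algebra 𝔮 with structure equations de¹ = e³⁷, de² = e⁴⁷, de³ = 2e¹⁷, de⁴ = 2e²⁷, de⁵ = e¹⁴ + e²³, de⁶ = e¹³ − e²⁴, de⁷ = 0, the 3-form φ = (e¹² + e³⁴ + e⁵⁶)∧e⁷ + e¹³⁵ − e¹⁴⁶ − e²³⁶ − e²⁴⁵ equals d_θ γ = dγ + θ∧γ for θ = −e⁷ and γ = (5/7)e¹² − (3/7)e¹⁴ + (3/7)e²³ − (1/7)e³⁴ − e⁵⁶; in particular dφ = e⁷∧φ. -/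

import Mathlib

noncomputable section

variable {n : ℕ}

/-- The `i`-th coordinate covector `eᵢ`. -/
def ec (i : Fin n) : (Fin n → ℝ) → ℝ := fun x => x i

/-- A bracket is a Lie bracket if it is bilinear, antisymmetric and satisfies
the Jacobi identity. -/
def IsLieBracket (br : (Fin n → ℝ) → (Fin n → ℝ) → (Fin n → ℝ)) : Prop :=
  (∀ x y z, br (x + y) z = br x z + br y z) ∧
  (∀ (a : ℝ) x y, br (a • x) y = a • br x y) ∧
  (∀ x y, br x y = -br y x) ∧
  (∀ x y z, br x (br y z) + br y (br z x) + br z (br x y) = 0)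

/-- Chevalley–Eilenberg differential of a 1-form: `dα(x,y) = -α([x,y])`. -/
def ced1 (br : (Fin n → ℝ) → (Fin n → ℝ) → (Fin n → ℝ)) (α : (Fin n → ℝ) → ℝ) :
    (Fin n → ℝ) → (Fin n → ℝ) → ℝ :=
  fun x y => -α (br x y)

/-- Chevalley–Eilenberg differential of a 2-form. -/
def ced2 (br : (Fin n → ℝ) → (Fin n → ℝ) → (Fin n → ℝ))
    (α : (Fin n → ℝ) → (Fin n → ℝ) → ℝ) :
    (Fin n → ℝ) → (Fin n → ℝ) → (Fin n → ℝ) → ℝ :=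
  fun x y z => -α (br x y) z + α (br x z) y - α (br y z) x

/-- Chevalley–Eilenberg differential of a 3-form. -/
def ced3 (br : (Fin n → ℝ) → (Fin n → ℝ) → (Fin n → ℝ))
    (α : (Fin n → ℝ) → (Fin n → ℝ) → (Fin n → ℝ) → ℝ) :
    (Fin n → ℝ) → (Fin n → ℝ) → (Fin n → ℝ) → (Fin n → ℝ) → ℝ :=
  fun w x y z =>
    -α (br w x) y z + α (br w y) x z - α (br w z) x y
      - α (br x y) w z + α (br x z) w y - α (br y z) w x

/-- Chevalley–Eilenberg differential of a 4-form. -/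
def ced4 (br : (Fin n → ℝ) → (Fin n → ℝ) → (Fin n → ℝ))
    (β : (Fin n → ℝ) → (Fin n → ℝ) → (Fin n → ℝ) → (Fin n → ℝ) → ℝ) :
    (Fin n → ℝ) → (Fin n → ℝ) → (Fin n → ℝ) → (Fin n → ℝ) → (Fin n → ℝ) → ℝ :=
  fun x0 x1 x2 x3 x4 =>
    -β (br x0 x1) x2 x3 x4 + β (br x0 x2) x1 x3 x4 - β (br x0 x3) x1 x2 x4
      + β (br x0 x4) x1 x2 x3 - β (br x1 x2) x0 x3 x4 + β (br x1 x3) x0 x2 x4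
      - β (br x1 x4) x0 x2 x3 - β (br x2 x3) x0 x1 x4 + β (br x2 x4) x0 x1 x3
      - β (br x3 x4) x0 x1 x2

/-- Wedge of two 1-forms. -/
def w11 (α β : (Fin n → ℝ) → ℝ) : (Fin n → ℝ) → (Fin n → ℝ) → ℝ :=
  fun x y => α x * β y - α y * β x

/-- Wedge of a 1-form and a 2-form. -/
def w12 (θ : (Fin n → ℝ) → ℝ) (α : (Fin n → ℝ) → (Fin n → ℝ) → ℝ) :
    (Fin n → ℝ) → (Fin n → ℝ) → (Fin n → ℝ) → ℝ :=
  fun x y z => θ x * α y z - θ y * α x z + θ z * α x y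

/-- Wedge of a 2-form and a 1-form. -/
def w21 (α : (Fin n → ℝ) → (Fin n → ℝ) → ℝ) (θ : (Fin n → ℝ) → ℝ) :
    (Fin n → ℝ) → (Fin n → ℝ) → (Fin n → ℝ) → ℝ :=
  fun x y z => α x y * θ z - α x z * θ y + α y z * θ x

/-- Wedge of a 1-form and a 3-form. -/
def w13 (θ : (Fin n → ℝ) → ℝ)
    (ψ : (Fin n → ℝ) → (Fin n → ℝ) → (Fin n → ℝ) → ℝ) :
    (Fin n → ℝ) → (Fin n → ℝ) → (Fin n → ℝ) → (Fin n → ℝ) → ℝ :=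
  fun w x y z => θ w * ψ x y z - θ x * ψ w y z + θ y * ψ w x z - θ z * ψ w x y

/-- Wedge of two 2-forms. -/
def w22 (α β : (Fin n → ℝ) → (Fin n → ℝ) → ℝ) :
    (Fin n → ℝ) → (Fin n → ℝ) → (Fin n → ℝ) → (Fin n → ℝ) → ℝ :=
  fun x0 x1 x2 x3 =>
    α x0 x1 * β x2 x3 - α x0 x2 * β x1 x3 + α x0 x3 * β x1 x2
      + α x2 x3 * β x0 x1 - α x1 x3 * β x0 x2 + α x1 x2 * β x0 x3

/-- The basic wedge monomial `eⁱ ∧ eʲ ∧ eᵏ` (0-indexed). -/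
def trip (i j k : Fin n) : (Fin n → ℝ) → (Fin n → ℝ) → (Fin n → ℝ) → ℝ :=
  fun x y z =>
    x i * y j * z k - x i * y k * z j - x j * y i * z k
      + x j * y k * z i + x k * y i * z j - x k * y j * z i

end

noncomputable section

/-- The structure equations of the solvable Lie algebra `𝔮`:
`de¹ = e³⁷, de² = e⁴⁷, de³ = 2e¹⁷, de⁴ = 2e²⁷, de⁵ = e¹⁴ + e²³,
de⁶ = e¹³ - e²⁴, de⁷ = 0` (0-indexed below). -/
def structEqQ (br : (Fin 7 → ℝ) → (Fin 7 → ℝ) → (Fin 7 → ℝ)) : Prop :=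
  ∀ x y : Fin 7 → ℝ,
    ced1 br (ec 0) x y = w11 (ec 2) (ec 6) x y ∧
    ced1 br (ec 1) x y = w11 (ec 3) (ec 6) x y ∧
    ced1 br (ec 2) x y = 2 * w11 (ec 0) (ec 6) x y ∧
    ced1 br (ec 3) x y = 2 * w11 (ec 1) (ec 6) x y ∧
    ced1 br (ec 4) x y = w11 (ec 0) (ec 3) x y + w11 (ec 1) (ec 2) x y ∧
    ced1 br (ec 5) x y = w11 (ec 0) (ec 2) x y - w11 (ec 1) (ec 3) x y ∧
    ced1 br (ec 6) x y = 0

/-- The `G₂`-form `φ = (e¹² + e³⁴ + e⁵⁶) ∧ e⁷ + e¹³⁵ - e¹⁴⁶ - e²³⁶ - e²⁴⁵`. -/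
def phiQ : (Fin 7 → ℝ) → (Fin 7 → ℝ) → (Fin 7 → ℝ) → ℝ :=
  fun x y z =>
    w21 (fun a b => w11 (ec 0) (ec 1) a b + w11 (ec 2) (ec 3) a b +
      w11 (ec 4) (ec 5) a b) (ec 6) x y z +
    (trip 0 2 4 x y z - trip 0 3 5 x y z - trip 1 2 5 x y z - trip 1 3 4 x y z)

/-- The 1-form `θ = -e⁷`. -/
def thetaQ : (Fin 7 → ℝ) → ℝ := fun x => -(ec 6 x)

/-- The 2-form `γ = (5/7)e¹² - (3/7)e¹⁴ + (3/7)e²³ - (1/7)e³⁴ - e⁵⁶`. -/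
def gammaQ : (Fin 7 → ℝ) → (Fin 7 → ℝ) → ℝ :=
  fun x y =>
    (5 / 7) * w11 (ec 0) (ec 1) x y - (3 / 7) * w11 (ec 0) (ec 3) x y
      + (3 / 7) * w11 (ec 1) (ec 2) x y - (1 / 7) * w11 (ec 2) (ec 3) x y
      - w11 (ec 4) (ec 5) x y
/-! The structure equations determine the bracket, so `φ = dγ + θ ∧ γ` is a polynomial
identity in the coordinates. The second claim is then formal: `θ` is closed, so
`d(θ ∧ γ) = -θ ∧ dγ`, and `d² = 0` by the Jacobi identity; hence
`dφ = -θ ∧ dγ = -θ ∧ (φ - θ ∧ γ) = -θ ∧ φ = e⁷ ∧ φ`. -/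

section

variable {n : ℕ} {br : (Fin n → ℝ) → (Fin n → ℝ) → (Fin n → ℝ)}

theorem IsLieBracket.neg_left (hbr : IsLieBracket br) (x y : Fin n → ℝ) :
    br (-x) y = -br x y := by
  simpa using hbr.2.1 (-1) x y

theorem IsLieBracket.neg_right (hbr : IsLieBracket br) (x y : Fin n → ℝ) :
    br x (-y) = -br x y := by
  rw [hbr.2.2.1, hbr.neg_left, ← hbr.2.2.1]

theorem ced3_ced2_eq_zero (hbr : IsLieBracket br) {α : (Fin n → ℝ) → (Fin n → ℝ) → ℝ}
    (hadd : ∀ a b c, α (a + b) c = α a c + α b c) (halt : ∀ a b, α a b = -α b a)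
    (w x y z : Fin n → ℝ) : ced3 br (ced2 br α) w x y z = 0 := by
  have hzero : ∀ c, α 0 c = 0 := fun c => by simpa using hadd 0 0 c
  have hneg : ∀ a c, α (-a) c = -α a c := fun a c => by
    have := hadd a (-a) c
    rw [add_neg_cancel, hzero] at this
    linarith
  have hjac : ∀ a b c v,
      α (br a (br b c)) v + α (br b (br c a)) v + α (br c (br a b)) v = 0 := fun a b c v => by
    rw [← hadd, ← hadd, hbr.2.2.2, hzero]
  have hswap_inner : ∀ a b c v, α (br a (br b c)) v = -α (br a (br c b)) v :=
    fun a b c v => by rw [hbr.2.2.1 b c, hbr.neg_right, hneg]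
  have hswap_outer : ∀ a b c v, α (br (br a b) c) v = -α (br c (br a b)) v :=
    fun a b c v => by rw [hbr.2.2.1 (br a b) c, hneg]
  simp only [ced3, ced2, hswap_outer]
  -- one Jacobi identity for each choice of the argument left outside the double brackets
  linear_combination -hjac w x y z + hswap_inner x y w z + hjac w x z y - hswap_inner x z w y
    - hjac w y z x + hswap_inner y z w x + hjac x y z w - hswap_inner y z x w
    + halt (br y z) (br w x) - halt (br x z) (br w y) + halt (br x y) (br w z)

theorem ced3_w12 (θ : (Fin n → ℝ) → ℝ) (γ : (Fin n → ℝ) → (Fin n → ℝ) → ℝ)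
    (w x y z : Fin n → ℝ) :
    ced3 br (w12 θ γ) w x y z = w22 (ced1 br θ) γ w x y z - w13 θ (ced2 br γ) w x y z := by
  simp only [ced3, w12, w22, ced1, w13, ced2]
  ring

theorem w13_w12_self (θ : (Fin n → ℝ) → ℝ) (γ : (Fin n → ℝ) → (Fin n → ℝ) → ℝ)
    (w x y z : Fin n → ℝ) : w13 θ (w12 θ γ) w x y z = 0 := by
  simp only [w13, w12]
  ring

theorem ced3_eq_neg_w13_of_eq_ced2_add_w12 (hbr : IsLieBracket br)
    {θ : (Fin n → ℝ) → ℝ} {γ : (Fin n → ℝ) → (Fin n → ℝ) → ℝ}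
    {φ : (Fin n → ℝ) → (Fin n → ℝ) → (Fin n → ℝ) → ℝ}
    (hadd : ∀ a b c, γ (a + b) c = γ a c + γ b c) (halt : ∀ a b, γ a b = -γ b a)
    (hθ : ∀ x y, ced1 br θ x y = 0)
    (hφ : ∀ x y z, φ x y z = ced2 br γ x y z + w12 θ γ x y z) (w x y z : Fin n → ℝ) :
    ced3 br φ w x y z = -w13 θ φ w x y z :=
  calc ced3 br φ w x y z
      = ced3 br (ced2 br γ) w x y z + ced3 br (w12 θ γ) w x y z := by
        simp only [ced3, hφ]
        ring
    _ = -w13 θ (ced2 br γ) w x y z := by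
        rw [ced3_ced2_eq_zero hbr hadd halt, ced3_w12]
        simp only [w22, hθ]
        ring
    _ = -w13 θ φ w x y z := by
        have hsplit : w13 θ φ w x y z = w13 θ (ced2 br γ) w x y z + w13 θ (w12 θ γ) w x y z := by
          simp only [w13, hφ]
          ring
        rw [hsplit, w13_w12_self]
        ring

end

/-- `[x, y]ₖ = -deᵏ(x, y)`, read off from the structure equations of `𝔮`. -/
def brQ (x y : Fin 7 → ℝ) : Fin 7 → ℝ :=
  ![-(x 2 * y 6 - x 6 * y 2),
    -(x 3 * y 6 - x 6 * y 3),
    -(2 * (x 0 * y 6 - x 6 * y 0)),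
    -(2 * (x 1 * y 6 - x 6 * y 1)),
    -((x 0 * y 3 - x 3 * y 0) + (x 1 * y 2 - x 2 * y 1)),
    -((x 0 * y 2 - x 2 * y 0) - (x 1 * y 3 - x 3 * y 1)),
    0]

theorem isLieBracket_brQ : IsLieBracket brQ := by
  refine ⟨fun x y z => ?_, fun a x y => ?_, fun x y => ?_, fun x y z => ?_⟩ <;>
    funext i <;> fin_cases i <;>
    simp only [brQ, Fin.zero_eta, Fin.mk_one, Fin.reduceFinMk, Matrix.cons_val_zero,
      Matrix.cons_val_one, Matrix.cons_val, Pi.add_apply, Pi.smul_apply, smul_eq_mul,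
      Pi.neg_apply, Pi.zero_apply] <;>
    ring

theorem structEqQ_iff {br : (Fin 7 → ℝ) → (Fin 7 → ℝ) → (Fin 7 → ℝ)} :
    structEqQ br ↔ br = brQ := by
  refine ⟨fun h => ?_, ?_⟩
  · funext x y i
    obtain ⟨h0, h1, h2, h3, h4, h5, h6⟩ := h x y
    simp only [ced1, ec, w11] at h0 h1 h2 h3 h4 h5 h6
    fin_cases i <;>
    simp only [brQ, Fin.zero_eta, Fin.mk_one, Fin.reduceFinMk, Matrix.cons_val_zero,
      Matrix.cons_val_one, Matrix.cons_val] <;>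
    linarith
  · rintro rfl x y
    refine ⟨?_, ?_, ?_, ?_, ?_, ?_, ?_⟩ <;>
    simp only [ced1, ec, w11, brQ, Matrix.cons_val_zero, Matrix.cons_val_one, Matrix.cons_val] <;>
    ring

theorem phiQ_eq_ced2_brQ_add_w12 (x y z : Fin 7 → ℝ) :
    phiQ x y z = ced2 brQ gammaQ x y z + w12 thetaQ gammaQ x y z := by
  simp only [phiQ, gammaQ, thetaQ, ced2, w21, w11, w12, trip, ec, brQ, Matrix.cons_val_zero,
    Matrix.cons_val_one, Matrix.cons_val]
  ring

theorem gammaQ_add_left (a b c : Fin 7 → ℝ) : gammaQ (a + b) c = gammaQ a c + gammaQ b c := by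
  simp only [gammaQ, w11, ec, Pi.add_apply]
  ring

theorem gammaQ_swap (a b : Fin 7 → ℝ) : gammaQ a b = -gammaQ b a := by
  simp only [gammaQ, w11, ec]
  ring

/-- On `𝔮`, the `G₂`-form `φ` equals `d_θ γ = dγ + θ ∧ γ` with
`θ = -e⁷`; in particular `dφ = e⁷ ∧ φ`. -/
theorem dTheta_exact_on_q :
    (∃ br : (Fin 7 → ℝ) → (Fin 7 → ℝ) → (Fin 7 → ℝ), IsLieBracket br ∧ structEqQ br) ∧
    ∀ br : (Fin 7 → ℝ) → (Fin 7 → ℝ) → (Fin 7 → ℝ), IsLieBracket br → structEqQ br →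
      (∀ x y z : Fin 7 → ℝ,
        phiQ x y z = ced2 br gammaQ x y z + w12 thetaQ gammaQ x y z) ∧
      (∀ w x y z : Fin 7 → ℝ, ced3 br phiQ w x y z = w13 (ec 6) phiQ w x y z) := by
  refine ⟨⟨brQ, isLieBracket_brQ, structEqQ_iff.2 rfl⟩, fun br hbr hs => ?_⟩
  have hθ : ∀ x y, ced1 br thetaQ x y = 0 := fun x y => by
    simpa [ced1, thetaQ] using (hs x y).2.2.2.2.2.2
  obtain rfl := structEqQ_iff.1 hs
  refine ⟨phiQ_eq_ced2_brQ_add_w12, fun w x y z => ?_⟩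
  rw [ced3_eq_neg_w13_of_eq_ced2_add_w12 hbr gammaQ_add_left gammaQ_swap hθ
    phiQ_eq_ced2_brQ_add_w12]
  simp only [w13, thetaQ]
  ring

end
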